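/- arXiv:2406.09137 — 2 statements merged into one kernel-verified Lean document; each statement's English description precedes it below -/
import Mathlib

section
/- There exists a real constant ε₀ > 0 such that for every real ε with 0 < ε < ε₀, every simple graph G on a finite vertex set, every nontrivial cluster C of the agreement decomposition of G with parameter ε, and all vertices u, v ∈ C, it holds that (1 − 5ε)·|N(v)| ≤ |N(u)| ≤ |N(v)|/(1 − 5ε). -/
/-!
Call two finite sets `c`-near if their symmetric difference is at most a `c`-fraction of the
larger one; `ε`-agreement is strict `ε`-nearness of neighbourhoods. Nearness composes with a
loss (`ε` and `ε` give `3ε`, `3ε` and `3ε` give `7ε`), but among heavy vertices `3ε`-nearness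
is transitive: if heavy `a`, `b` are `7ε`-near, the neighbours they agree with fill more than a
`(1 - ε)`-fraction of two strongly overlapping neighbourhoods, so some `y` agrees with both,
and going through `y` brings `a`, `b` back to `3ε`. Since a light vertex is `G̃`-adjacent only
to heavy ones, every vertex reachable from a heavy `a` is `ε`-near a heavy vertex that is
`3ε`-near `a`. A nontrivial cluster contains a heavy vertex, so the degrees of `u`, `v` are linked
by ratios `1 - ε`, `1 - 3ε`, `1 - ε`, and `(1 - ε)²(1 - 3ε) ≥ 1 - 5ε`.
-/

open scoped symmDiff Classical

/-- Two vertices `u, v` are in `ε`-agreement in `G` if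
`|N(u) △ N(v)| < ε·max(|N(u)|, |N(v)|)`. -/
def InAgreement {V : Type*} [Fintype V] [DecidableEq V]
    (G : SimpleGraph V) [DecidableRel G.Adj] (ε : ℝ) (u v : V) : Prop :=
  ((G.neighborFinset u ∆ G.neighborFinset v).card : ℝ) <
    ε * (max (G.neighborFinset u).card (G.neighborFinset v).card : ℕ)

/-- A vertex is `ε`-heavy if it is in `ε`-agreement with more than a
`(1 − ε)`-fraction of its neighbors. -/
noncomputable def Heavy {V : Type*} [Fintype V] [DecidableEq V]
    (G : SimpleGraph V) [DecidableRel G.Adj] (ε : ℝ) (u : V) : Prop :=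
  (1 - ε) * ((G.neighborFinset u).card : ℝ) <
    (((G.neighborFinset u).filter (fun v => InAgreement G ε u v)).card : ℝ)

/-- The graph `G̃` obtained from `G` by deleting every edge whose endpoints are
not in `ε`-agreement and then every remaining edge both of whose endpoints are
`ε`-light. -/
noncomputable def tildeGraph {V : Type*} [Fintype V] [DecidableEq V]
    (G : SimpleGraph V) [DecidableRel G.Adj] (ε : ℝ) : SimpleGraph V where
  Adj u v := G.Adj u v ∧ InAgreement G ε u v ∧ (Heavy G ε u ∨ Heavy G ε v)
  symm := by
    constructor
    intro u v ⟨h1, h2, h3⟩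
    refine ⟨h1.symm, ?_, h3.symm⟩
    unfold InAgreement at h2 ⊢
    rwa [symmDiff_comm, max_comm]
  loopless := ⟨fun u h => G.loopless.irrefl u h.1⟩

/-- `C` is a cluster of the agreement decomposition of `G` with parameter `ε`:
the vertex set of a connected component of `G̃`. -/
noncomputable def IsCluster {V : Type*} [Fintype V] [DecidableEq V]
    (G : SimpleGraph V) [DecidableRel G.Adj] (ε : ℝ) (C : Finset V) : Prop :=
  ∃ v : V, C = Finset.univ.filter (fun w => (tildeGraph G ε).Reachable v w)

open Finset

namespace Finset

variable {α : Type*} [DecidableEq α] (s t u : Finset α)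

theorem card_le_card_add_card_symmDiff : #s ≤ #t + #(s ∆ t) :=
  (card_le_card_sdiff_add_card (t := t)).trans <| by
    rw [add_comm]
    gcongr
    exact symmDiff_subset_sdiff

theorem card_symmDiff_le_add : #(s ∆ u) ≤ #(s ∆ t) + #(t ∆ u) :=
  (card_le_card (symmDiff_triangle s t u)).trans (card_union_le _ _)

theorem two_mul_card_union : 2 * #(s ∪ t) = #s + #t + #(s ∆ t) := by
  have h1 := card_union_add_card_inter s t
  have h2 : #(s ∆ t) = #(s ∪ t) - #(s ∩ t) := by
    rw [symmDiff_eq_sup_sdiff_inf, sup_eq_union, inf_eq_inter,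
      card_sdiff_of_subset inter_subset_union]
  have h3 := card_le_card (inter_subset_union (s := s) (t := t))
  omega

theorem inter_nonempty_of_card_symmDiff_le {ε : ℝ} {s t A B : Finset α}
    (hA : A ⊆ s) (hB : B ⊆ t) (hAcard : (1 - ε) * #s < #A) (hBcard : (1 - ε) * #t < #B)
    (hst : (#(s ∆ t) : ℝ) ≤ (1 - 2 * ε) * (#s + #t)) : (A ∩ B).Nonempty := by
  refine inter_nonempty_of_card_lt_card_add_card (hA.trans subset_union_left)
    (hB.trans subset_union_right) ?_
  have hunion : (2 * #(s ∪ t) : ℝ) = #s + #t + #(s ∆ t) := mod_cast two_mul_card_union s t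
  exact_mod_cast (show (#(s ∪ t) : ℝ) < #A + #B by linarith)

def Near (c : ℝ) (s t : Finset α) : Prop := (#(s ∆ t) : ℝ) ≤ c * max (#s : ℝ) #t

variable {s t u} {a c : ℝ}

theorem near_self (hc : 0 ≤ c) (s : Finset α) : Near c s s := by
  simp only [Near, symmDiff_self, bot_eq_empty, card_empty, Nat.cast_zero]
  positivity

theorem Near.symm (h : Near c s t) : Near c t s := by
  rwa [Near, symmDiff_comm, max_comm]

theorem Near.mono (h : Near a s t) (hac : a ≤ c) : Near c s t :=
  le_trans h (by gcongr)

theorem Near.mul_card_le (h : Near c s t) (hc : 0 ≤ c) : (1 - c) * #t ≤ (#s : ℝ) := by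
  have hts : (#t : ℝ) ≤ #s + #(t ∆ s) := mod_cast card_le_card_add_card_symmDiff t s
  rw [symmDiff_comm] at hts
  rcases le_total (#s : ℝ) #t with hle | hle
  · rw [Near, max_eq_right hle] at h
    linarith
  · nlinarith [(#t).cast_nonneg (α := ℝ)]

theorem Near.mul_max_le (h : Near c s t) (hc : 0 ≤ c) : (1 - c) * max (#s : ℝ) #t ≤ #s := by
  rcases max_cases (#s : ℝ) #t with ⟨hmax, -⟩ | ⟨hmax, -⟩ <;> rw [hmax]
  · nlinarith [(#s).cast_nonneg (α := ℝ)]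
  · exact h.mul_card_le hc

theorem Near.trans (hst : Near a s t) (htu : Near a t u) (ha : 0 ≤ a) (ha1 : a < 1)
    (hc : 2 * a ≤ c * (1 - a)) : Near c s u := by
  have hs := hst.mul_max_le ha
  have hu := htu.symm.mul_max_le ha
  rw [max_comm] at hu
  have htri : (#(s ∆ u) : ℝ) ≤ #(s ∆ t) + #(t ∆ u) := mod_cast card_symmDiff_le_add s t u
  have hsM : (#s : ℝ) ≤ max (#s : ℝ) #u := le_max_left _ _
  have huM : (#u : ℝ) ≤ max (#s : ℝ) #u := le_max_right _ _
  have key : (1 - a) * #(s ∆ u) ≤ (1 - a) * (c * max (#s : ℝ) #u) := by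
    unfold Near at hst htu
    nlinarith [mul_le_mul_of_nonneg_left hsM ha, mul_le_mul_of_nonneg_left huM ha]
  exact le_of_mul_le_mul_left key (by linarith)

end Finset

section AgreementDecomposition

variable {V : Type*} [Fintype V] [DecidableEq V] {G : SimpleGraph V} [DecidableRel G.Adj]
  {ε : ℝ} {a b u v : V}

local notation "N" => G.neighborFinset

theorem InAgreement.near (h : InAgreement G ε u v) : Near ε (N u) (N v) := by
  rw [InAgreement, Nat.cast_max] at h
  exact h.le

theorem Heavy.exists_inAgreement_inAgreement (ha : Heavy G ε a) (hb : Heavy G ε b)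
    (hε : 0 ≤ ε) (hε' : ε ≤ 1 / 21) (hab : Near (7 * ε) (N a) (N b)) :
    ∃ y, InAgreement G ε a y ∧ InAgreement G ε b y := by
  have hMa := hab.mul_max_le (by positivity)
  have hMb := hab.symm.mul_max_le (by positivity)
  rw [max_comm] at hMb
  set M := max (#(N a) : ℝ) #(N b)
  have hM : 0 ≤ M := le_max_of_le_left (Nat.cast_nonneg _)
  have hst : (#(N a ∆ N b) : ℝ) ≤ (1 - 2 * ε) * (#(N a) + #(N b)) :=
    calc (#(N a ∆ N b) : ℝ) ≤ 7 * ε * M := hab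
      _ ≤ (1 - 2 * ε) * (2 * (1 - 7 * ε) * M) := by
        nlinarith [mul_nonneg hM (sub_nonneg.2 hε'), mul_nonneg (mul_nonneg hM hε) hε]
      _ ≤ (1 - 2 * ε) * (#(N a) + #(N b)) :=
        mul_le_mul_of_nonneg_left (by linarith) (by linarith)
  obtain ⟨y, hy⟩ :=
    inter_nonempty_of_card_symmDiff_le (filter_subset _ _) (filter_subset _ _) ha hb hst
  simp only [mem_inter, mem_filter] at hy
  exact ⟨y, hy.1.2, hy.2.2⟩

theorem Heavy.near_trans (ha : Heavy G ε a) (hb : Heavy G ε b)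
    (hε : 0 ≤ ε) (hε' : ε ≤ 1 / 21)
    (hau : Near (3 * ε) (N a) (N u)) (hub : Near (3 * ε) (N u) (N b)) :
    Near (3 * ε) (N a) (N b) := by
  obtain ⟨y, hay, hby⟩ := ha.exists_inAgreement_inAgreement hb hε hε'
    (hau.trans hub (by positivity) (by linarith) (by nlinarith))
  exact hay.near.trans hby.near.symm hε (by linarith) (by nlinarith)

theorem Heavy.exists_heavy_near_of_reachable (ha : Heavy G ε a) (hε : 0 ≤ ε)
    (hε' : ε ≤ 1 / 21) (hab : (tildeGraph G ε).Reachable a b) :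
    ∃ h, Heavy G ε h ∧ Near (3 * ε) (N a) (N h) ∧ Near ε (N h) (N b) := by
  rw [SimpleGraph.reachable_iff_reflTransGen] at hab
  induction hab with
  | refl => exact ⟨a, ha, near_self (by positivity) _, near_self hε _⟩
  | @tail b c _ hbc ih =>
    obtain ⟨h, hh, hah, hhb⟩ := ih
    have hbc' : Near ε (N b) (N c) := hbc.2.1.near
    by_cases hc : Heavy G ε c
    · refine ⟨c, hc, ha.near_trans hc hε hε' hah ?_, near_self hε _⟩
      exact hhb.trans hbc' hε (by linarith) (by nlinarith)
    · have hb : Heavy G ε b := hbc.2.2.resolve_right hc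
      exact ⟨b, hb, ha.near_trans hb hε hε' hah (hhb.mono (by linarith)), hbc'⟩

theorem IsCluster.exists_heavy {C : Finset V} (hC : IsCluster G ε C) (hC1 : 1 < #C) :
    ∃ a, Heavy G ε a ∧ ∀ w ∈ C, (tildeGraph G ε).Reachable a w := by
  obtain ⟨v₀, rfl⟩ := hC
  simp only [mem_filter, mem_univ, true_and]
  obtain ⟨x, hx⟩ := card_pos.mp (zero_lt_one.trans hC1)
  obtain ⟨y, hy, hyx⟩ := exists_mem_ne hC1 x
  simp only [mem_filter, mem_univ, true_and] at hx hy
  obtain ⟨p⟩ := hx.symm.trans hy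
  have hxz := p.adj_snd (p.not_nil_of_ne hyx.symm)
  have hz := hx.trans hxz.reachable
  rcases hxz.2.2 with hxh | hzh
  · exact ⟨x, hxh, fun w hw => hx.symm.trans hw⟩
  · exact ⟨_, hzh, fun w hw => hz.symm.trans hw⟩

theorem IsCluster.mul_card_le {C : Finset V} (hC : IsCluster G ε C) (hC1 : 1 < #C)
    (hε : 0 ≤ ε) (hε' : ε ≤ 1 / 21) (hu : u ∈ C) (hv : v ∈ C) :
    (1 - 5 * ε) * #(N v) ≤ (#(N u) : ℝ) := by
  obtain ⟨a, ha, hreach⟩ := hC.exists_heavy hC1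
  obtain ⟨x, hx, hax, hxu⟩ := ha.exists_heavy_near_of_reachable hε hε' (hreach u hu)
  obtain ⟨y, hy, hay, hyv⟩ := ha.exists_heavy_near_of_reachable hε hε' (hreach v hv)
  have hxy := hx.near_trans hy hε hε' hax.symm hay
  have hdv : (0 : ℝ) ≤ #(N v) := Nat.cast_nonneg _
  calc (1 - 5 * ε) * #(N v)
      ≤ (1 - ε) * ((1 - 3 * ε) * ((1 - ε) * #(N v))) := by
        nlinarith [mul_nonneg (mul_nonneg hdv hε) hε,
          mul_nonneg (mul_nonneg hdv hε) (sub_nonneg.2 hε')]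
    _ ≤ (1 - ε) * ((1 - 3 * ε) * #(N y)) := by
        gcongr
        · linarith
        · linarith
        · exact hyv.mul_card_le hε
    _ ≤ (1 - ε) * #(N x) := by
        gcongr
        · linarith
        · exact hxy.mul_card_le (by positivity)
    _ ≤ #(N u) := hxu.symm.mul_card_le hε

end AgreementDecomposition

/-- Property 8: for every nontrivial cluster `C` of the agreement decomposition
and all `u, v ∈ C`, `(1 − 5ε)·|N(v)| ≤ |N(u)| ≤ |N(v)|/(1 − 5ε)`. -/
theorem cluster_degree_bounds :
    ∃ ε₀ : ℝ, 0 < ε₀ ∧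
      ∀ (V : Type) (_ : Fintype V) (_ : DecidableEq V)
        (G : SimpleGraph V) (_ : DecidableRel G.Adj) (ε : ℝ), 0 < ε → ε < ε₀ →
        ∀ C : Finset V, IsCluster G ε C → 1 < C.card →
          ∀ u ∈ C, ∀ v ∈ C,
            (1 - 5 * ε) * ((G.neighborFinset v).card : ℝ) ≤
                ((G.neighborFinset u).card : ℝ) ∧
              ((G.neighborFinset u).card : ℝ) ≤
                ((G.neighborFinset v).card : ℝ) / (1 - 5 * ε) := by
  refine ⟨1 / 21, by norm_num, fun V _ _ G _ ε hε hε' C hC hC1 u hu v hv => ⟨?_, ?_⟩⟩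
  · exact hC.mul_card_le hC1 hε.le hε'.le hu hv
  · rw [le_div_iff₀ (by linarith), mul_comm]
    exact hC.mul_card_le hC1 hε.le hε'.le hv hu
end

section
/- There exists a real constant ε₀ > 0 such that for every real ε with 0 < ε < ε₀, every simple graph G on a finite vertex set, every nontrivial cluster C of the agreement decomposition of G with parameter ε/10^14, and every vertex u ∈ C, it holds that (1 − ε/10^13)·|C| ≤ |N(u)| ≤ (1 + ε/10^13)·|C|. -/
/-!
Measure closeness of `a, b` by `|N(a) △ N(b)| ≤ t · max(deg a, deg b)`; the neighbourhood distance
satisfies the triangle inequality, so closeness composes with a small loss. Two heavy vertices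
that are `20 δ`-close have a common agreeing neighbour, hence are even `2.1 δ`-close. As `G̃` has
no light–light edges, following a walk in `G̃` therefore keeps every vertex of a cluster `5 δ`-close
to any heavy vertex `h` of it. A nontrivial cluster has a heavy vertex `h` that is `δ`-close to the
given `u`. The agreeing neighbours of `h` lie in the cluster, so `|C| > (1 - δ) deg h`; counting the
edges between `C` and them gives `(1 - 6.5 δ) |C| ≤ (1 + 2 δ) deg h`.
-/

open scoped symmDiff Classical

open Finset SimpleGraph

section

variable {V : Type*} [Fintype V] [DecidableEq V] {G : SimpleGraph V} [DecidableRel G.Adj]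
  {δ s t : ℝ} {C : Finset V} {a b c h u w x y : V}

def nbhdDist (G : SimpleGraph V) [DecidableRel G.Adj] (a b : V) : ℕ :=
  #(G.neighborFinset a ∆ G.neighborFinset b)

lemma nbhdDist_comm (a b : V) : nbhdDist G a b = nbhdDist G b a := by
  rw [nbhdDist, nbhdDist, symmDiff_comm]

lemma nbhdDist_self (a : V) : nbhdDist G a a = 0 := by
  simp [nbhdDist]

lemma nbhdDist_triangle (a b c : V) : nbhdDist G a c ≤ nbhdDist G a b + nbhdDist G b c :=
  (card_le_card (symmDiff_triangle _ _ _)).trans (card_union_le _ _)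

lemma card_neighborFinset_union_le (a b : V) :
    #(G.neighborFinset a ∪ G.neighborFinset b) ≤ G.degree a + nbhdDist G a b := by
  rw [← card_neighborFinset_eq_degree, ← union_sdiff_self_eq_union]
  exact (card_union_le _ _).trans (Nat.add_le_add_left (card_le_card symmDiff_subset_sdiff') _)

lemma degree_le_degree_add_nbhdDist (a b : V) : G.degree b ≤ G.degree a + nbhdDist G a b := by
  rw [← card_neighborFinset_eq_degree G b]
  exact (card_le_card subset_union_right).trans (card_neighborFinset_union_le a b)

def NbhdClose (G : SimpleGraph V) [DecidableRel G.Adj] (t : ℝ) (a b : V) : Prop :=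
  (nbhdDist G a b : ℝ) ≤ t * max (G.degree a : ℝ) (G.degree b)

lemma nbhdClose_self (ht : 0 ≤ t) (a : V) : NbhdClose G t a a := by
  rw [NbhdClose, nbhdDist_self, Nat.cast_zero]
  positivity

lemma NbhdClose.symm (h : NbhdClose G t a b) : NbhdClose G t b a := by
  rwa [NbhdClose, nbhdDist_comm, max_comm]

lemma NbhdClose.mono (hst : s ≤ t) (h : NbhdClose G s a b) : NbhdClose G t a b :=
  h.trans (mul_le_mul_of_nonneg_right hst (by positivity))

lemma InAgreement.nbhdClose (h : InAgreement G t a b) : NbhdClose G t a b := by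
  simp only [InAgreement, Nat.cast_max, card_neighborFinset_eq_degree] at h
  exact h.le

lemma NbhdClose.max_degree_le (ht0 : 0 ≤ t) (ht : t ≤ 1 / 2) (h : NbhdClose G t a b) :
    max (G.degree a : ℝ) (G.degree b) ≤ (1 + 2 * t) * G.degree a := by
  set M := max (G.degree a : ℝ) (G.degree b)
  have hM0 : 0 ≤ M := by positivity
  have hb : (G.degree b : ℝ) ≤ G.degree a + nbhdDist G a b := by
    exact_mod_cast degree_le_degree_add_nbhdDist a b
  have hM : M ≤ G.degree a + t * M :=
    max_le (by nlinarith) (hb.trans (by unfold NbhdClose at h; linarith))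
  -- `(1 + 2t)(1 - t) ≥ 1` for `t ≤ 1/2`
  nlinarith [mul_nonneg (mul_nonneg ht0 (by linarith : (0 : ℝ) ≤ 1 - 2 * t)) hM0]

lemma NbhdClose.degree_le (ht0 : 0 ≤ t) (ht : t ≤ 1 / 2) (h : NbhdClose G t a b) :
    (G.degree b : ℝ) ≤ (1 + 2 * t) * G.degree a :=
  (le_max_right _ _).trans (h.max_degree_le ht0 ht)

lemma NbhdClose.nbhdDist_le (ht0 : 0 ≤ t) (ht : t ≤ 1 / 2) (h : NbhdClose G t a b) :
    (nbhdDist G a b : ℝ) ≤ t * (1 + 2 * t) * G.degree a := by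
  rw [mul_assoc]
  exact h.trans (mul_le_mul_of_nonneg_left (h.max_degree_le ht0 ht) ht0)

lemma NbhdClose.trans (hs0 : 0 ≤ s) (hs : s ≤ 1 / 20) (ht0 : 0 ≤ t) (ht : t ≤ 1 / 20)
    (hab : NbhdClose G s a b) (hbc : NbhdClose G t b c) : NbhdClose G (13 / 10 * (s + t)) a c := by
  have hbc' : (nbhdDist G b c : ℝ) ≤ t * (1 + 2 * t) * ((1 + 2 * s) * G.degree a) :=
    (hbc.nbhdDist_le ht0 (by linarith)).trans
      (mul_le_mul_of_nonneg_left (hab.degree_le hs0 (by linarith)) (by positivity))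
  have hcoef : s * (1 + 2 * s) + t * (1 + 2 * t) * (1 + 2 * s) ≤ 13 / 10 * (s + t) := by
    nlinarith [mul_nonneg hs0 ht0, mul_nonneg (mul_nonneg ht0 ht0) hs0]
  calc (nbhdDist G a c : ℝ) ≤ nbhdDist G a b + nbhdDist G b c := by
        exact_mod_cast nbhdDist_triangle a b c
    _ ≤ (s * (1 + 2 * s) + t * (1 + 2 * t) * (1 + 2 * s)) * G.degree a := by
        linarith [hab.nbhdDist_le hs0 (by linarith)]
    _ ≤ 13 / 10 * (s + t) * max (G.degree a : ℝ) (G.degree c) := by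
        gcongr
        exact le_max_left _ _

noncomputable def agreeingNeighborFinset (G : SimpleGraph V) [DecidableRel G.Adj] (δ : ℝ)
    (a : V) : Finset V :=
  (G.neighborFinset a).filter (fun v => InAgreement G δ a v)

lemma mem_agreeingNeighborFinset :
    x ∈ agreeingNeighborFinset G δ a ↔ G.Adj a x ∧ InAgreement G δ a x := by
  rw [agreeingNeighborFinset, mem_filter, mem_neighborFinset]

lemma agreeingNeighborFinset_subset_neighborFinset (a : V) :
    agreeingNeighborFinset G δ a ⊆ G.neighborFinset a :=
  filter_subset _ _

lemma heavy_iff : Heavy G δ a ↔ (1 - δ) * G.degree a < #(agreeingNeighborFinset G δ a) := by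
  rw [Heavy, card_neighborFinset_eq_degree, agreeingNeighborFinset]

lemma Heavy.degree_pos (h : Heavy G δ a) : 0 < G.degree a := by
  have hle := card_le_card (agreeingNeighborFinset_subset_neighborFinset (G := G) (δ := δ) a)
  rw [card_neighborFinset_eq_degree] at hle
  rw [heavy_iff] at h
  refine Nat.pos_of_ne_zero fun h0 => ?_
  rw [h0, Nat.cast_zero, mul_zero, Nat.cast_pos] at h
  omega

/-- The agreeing neighbourhoods of `a` and `b` each fill most of `N(a) ∪ N(b)`. -/
lemma Heavy.exists_inAgreement_of_nbhdClose (hδ0 : 0 ≤ δ) (hδ : δ ≤ 1 / 100) (ha : Heavy G δ a)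
    (hb : Heavy G δ b) (hab : NbhdClose G (20 * δ) a b) :
    ∃ x, InAgreement G δ a x ∧ InAgreement G δ b x := by
  set A := agreeingNeighborFinset G δ a
  set B := agreeingNeighborFinset G δ b
  have hunion : (#(A ∪ B) : ℝ) ≤ G.degree a + nbhdDist G a b := by
    exact_mod_cast (card_le_card (union_subset_union
      (agreeingNeighborFinset_subset_neighborFinset a)
      (agreeingNeighborFinset_subset_neighborFinset b))).trans (card_neighborFinset_union_le a b)
  have hsum : (#(A ∪ B) : ℝ) + #(A ∩ B) = #A + #B := by
    exact_mod_cast card_union_add_card_inter A B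
  have hM := hab.symm.max_degree_le (by positivity) (by linarith)
  rw [max_comm] at hM
  have hda : (G.degree a : ℝ) ≤ max (G.degree a : ℝ) (G.degree b) := le_max_left _ _
  have hdist : (nbhdDist G a b : ℝ) ≤ 20 * δ * max (G.degree a : ℝ) (G.degree b) := hab
  have hpos : (0 : ℝ) < #(A ∩ B) := by
    nlinarith [heavy_iff.1 ha, heavy_iff.1 hb, mul_nonneg hδ0 (G.degree b).cast_nonneg,
      mul_nonneg (mul_nonneg hδ0 hδ0) (G.degree b).cast_nonneg]
  obtain ⟨x, hx⟩ := card_pos.1 (by exact_mod_cast hpos)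
  rw [mem_inter, mem_agreeingNeighborFinset, mem_agreeingNeighborFinset] at hx
  exact ⟨x, hx.1.2, hx.2.2⟩

/-- The bootstrap that keeps the closeness of heavy vertices from degrading along walks in `G̃`. -/
lemma Heavy.nbhdClose_of_nbhdClose (hδ0 : 0 ≤ δ) (hδ : δ ≤ 1 / 100) (ha : Heavy G δ a)
    (hb : Heavy G δ b) (hab : NbhdClose G (20 * δ) a b) : NbhdClose G (21 / 10 * δ) a b := by
  obtain ⟨x, hax, hbx⟩ := ha.exists_inAgreement_of_nbhdClose hδ0 hδ hb hab
  have hax' := hax.nbhdClose.nbhdDist_le hδ0 (by linarith)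
  have hbx' := hbx.nbhdClose.nbhdDist_le hδ0 (by linarith)
  have htri := nbhdDist_triangle (G := G) a x b
  rw [nbhdDist_comm x b] at htri
  have hda : (G.degree a : ℝ) ≤ max (G.degree a : ℝ) (G.degree b) := le_max_left _ _
  have hdb : (G.degree b : ℝ) ≤ max (G.degree a : ℝ) (G.degree b) := le_max_right _ _
  calc (nbhdDist G a b : ℝ) ≤ nbhdDist G a x + nbhdDist G b x := by exact_mod_cast htri
    _ ≤ δ * (1 + 2 * δ) * (G.degree a + G.degree b) := by linarith
    _ ≤ δ * (1 + 2 * δ) * (2 * max (G.degree a : ℝ) (G.degree b)) := by gcongr; linarith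
    _ ≤ 21 / 10 * δ * max (G.degree a : ℝ) (G.degree b) := by
        have : 0 ≤ δ * max (G.degree a : ℝ) (G.degree b) := by positivity
        nlinarith

/-- Light vertices cannot be bootstrapped, but a light vertex is only ever entered from a heavy
one, so the looser bound `5 δ` survives. -/
lemma Heavy.nbhdClose_of_adj (hδ0 : 0 ≤ δ) (hδ : δ ≤ 1 / 100) (ha : Heavy G δ a)
    (hx : NbhdClose G (5 * δ) a x) (hxH : Heavy G δ x → NbhdClose G (21 / 10 * δ) a x)
    (hxy : (tildeGraph G δ).Adj x y) :
    NbhdClose G (5 * δ) a y ∧ (Heavy G δ y → NbhdClose G (21 / 10 * δ) a y) := by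
  obtain ⟨-, hagree, hxy_heavy⟩ := hxy
  by_cases hy : Heavy G δ y
  · have hay : NbhdClose G (20 * δ) a y :=
      (hx.trans (by positivity) (by linarith) hδ0 (by linarith) hagree.nbhdClose).mono (by linarith)
    have hay' := ha.nbhdClose_of_nbhdClose hδ0 hδ hy hay
    exact ⟨hay'.mono (by linarith), fun _ => hay'⟩
  · have hax := hxH (hxy_heavy.resolve_right hy)
    exact ⟨(hax.trans (by positivity) (by linarith) hδ0 (by linarith) hagree.nbhdClose).mono
      (by linarith), fun h => absurd h hy⟩

lemma Heavy.nbhdClose_of_reachable (hδ0 : 0 ≤ δ) (hδ : δ ≤ 1 / 100) (ha : Heavy G δ a)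
    (h : (tildeGraph G δ).Reachable a w) :
    NbhdClose G (5 * δ) a w ∧ (Heavy G δ w → NbhdClose G (21 / 10 * δ) a w) := by
  rw [reachable_iff_reflTransGen] at h
  induction h with
  | refl => exact ⟨nbhdClose_self (by positivity) a, fun _ => nbhdClose_self (by positivity) a⟩
  | tail _ hxy ih => exact ha.nbhdClose_of_adj hδ0 hδ ih.1 ih.2 hxy

lemma card_le_card_filter_adj_add_nbhdDist {S : Finset V} (hS : S ⊆ G.neighborFinset a) (w : V) :
    #S ≤ #{x ∈ S | G.Adj w x} + nbhdDist G a w := by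
  have hsdiff : {x ∈ S | ¬G.Adj w x} ⊆ G.neighborFinset a ∆ G.neighborFinset w := fun x hx => by
    rw [mem_filter] at hx
    exact symmDiff_subset_sdiff (mem_sdiff.2 ⟨hS hx.1, by rw [mem_neighborFinset]; exact hx.2⟩)
  rw [← card_filter_add_card_filter_not (fun x => G.Adj w x)]
  exact Nat.add_le_add_left (card_le_card hsdiff) _

lemma IsCluster.reachable (hC : IsCluster G δ C) (hx : x ∈ C) (hy : y ∈ C) :
    (tildeGraph G δ).Reachable x y := by
  obtain ⟨v, rfl⟩ := hC
  simp only [mem_filter, mem_univ, true_and] at hx hy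
  exact hx.symm.trans hy

lemma IsCluster.mem_of_reachable (hC : IsCluster G δ C) (hx : x ∈ C)
    (h : (tildeGraph G δ).Reachable x y) : y ∈ C := by
  obtain ⟨v, rfl⟩ := hC
  simp only [mem_filter, mem_univ, true_and] at hx ⊢
  exact hx.trans h

lemma IsCluster.exists_heavy_nbhdClose (hδ0 : 0 ≤ δ) (hC : IsCluster G δ C) (hC1 : 1 < #C)
    (hu : u ∈ C) : ∃ h ∈ C, Heavy G δ h ∧ NbhdClose G δ h u := by
  by_cases huH : Heavy G δ u
  · exact ⟨u, hu, huH, nbhdClose_self hδ0 u⟩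
  obtain ⟨v, hv, hvu⟩ := exists_mem_ne hC1 u
  obtain ⟨z, hz⟩ := (hC.reachable hu hv).nonempty_neighborSet_left hvu.symm
  obtain ⟨-, hagree, hheavy⟩ := id hz
  exact ⟨z, hC.mem_of_reachable hu (Adj.reachable hz), hheavy.resolve_left huH,
    hagree.nbhdClose.symm⟩

lemma IsCluster.agreeingNeighborFinset_subset (hC : IsCluster G δ C) (hh : h ∈ C)
    (hH : Heavy G δ h) : agreeingNeighborFinset G δ h ⊆ C := fun x hx => by
  rw [mem_agreeingNeighborFinset] at hx
  exact hC.mem_of_reachable hh (Adj.reachable ⟨hx.1, hx.2, Or.inl hH⟩)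

lemma IsCluster.degree_lt_card (hC : IsCluster G δ C) (hh : h ∈ C) (hH : Heavy G δ h) :
    (1 - δ) * G.degree h + 1 < #C := by
  have hnotin : h ∉ agreeingNeighborFinset G δ h := fun hmem =>
    G.loopless.irrefl h (mem_agreeingNeighborFinset.1 hmem).1
  have hcard := card_le_card (insert_subset hh (hC.agreeingNeighborFinset_subset hh hH))
  rw [card_insert_of_notMem hnotin] at hcard
  have := heavy_iff.1 hH
  have : (#(agreeingNeighborFinset G δ h) : ℝ) + 1 ≤ #C := by exact_mod_cast hcard
  linarith

/-- Double counting the edges between `C` and the agreeing neighbourhood of `h`: every vertex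
of `C` sends almost `deg h` edges there, and every vertex there has degree at most about
`deg h`. -/
lemma IsCluster.card_le_degree (hδ0 : 0 ≤ δ) (hδ : δ ≤ 1 / 100) (hC : IsCluster G δ C)
    (hh : h ∈ C) (hH : Heavy G δ h) :
    (1 - 13 / 2 * δ) * #C ≤ (1 + 2 * δ) * G.degree h := by
  set S := agreeingNeighborFinset G δ h
  set D : ℝ := (G.degree h : ℝ)
  have hD : 0 < D := Nat.cast_pos.2 hH.degree_pos
  have hS : (1 - δ) * D < #S := heavy_iff.1 hH
  have hSD : (#S : ℝ) ≤ D := Nat.cast_le.2 <|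
    (card_le_card (agreeingNeighborFinset_subset_neighborFinset h)).trans_eq
      (card_neighborFinset_eq_degree G h)
  have hlow : ∀ w ∈ C, (1 - 13 / 2 * δ) * D ≤ #(S.bipartiteAbove (fun w x => G.Adj w x) w) := by
    intro w hw
    have hcount : (#S : ℝ) ≤ #{x ∈ S | G.Adj w x} + nbhdDist G h w := by
      exact_mod_cast card_le_card_filter_adj_add_nbhdDist
        (agreeingNeighborFinset_subset_neighborFinset h) w
    have hdist := ((hH.nbhdClose_of_reachable hδ0 hδ (hC.reachable hh hw)).1).nbhdDist_le
      (by positivity) (by linarith)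
    have : δ * D ≤ D / 100 := by nlinarith
    rw [bipartiteAbove]
    nlinarith
  have hhigh :
      ∀ x ∈ S, (#(C.bipartiteBelow (fun w x => G.Adj w x) x) : ℝ) ≤ (1 + 2 * δ) * D := by
    intro x hx
    have hsub : C.bipartiteBelow (fun w x => G.Adj w x) x ⊆ G.neighborFinset x := fun w hw => by
      rw [mem_bipartiteBelow] at hw
      exact (mem_neighborFinset _ _ _).2 hw.2.symm
    have hdeg := (mem_agreeingNeighborFinset.1 hx).2.nbhdClose.degree_le hδ0 (by linarith)
    exact (Nat.cast_le.2 ((card_le_card hsub).trans_eq (card_neighborFinset_eq_degree G x))).trans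
      hdeg
  have hdouble := card_nsmul_le_card_nsmul (fun w x => G.Adj w x) hlow hhigh
  rw [nsmul_eq_mul, nsmul_eq_mul] at hdouble
  have : (1 - 13 / 2 * δ) * #C * D ≤ (1 + 2 * δ) * D * D := by
    nlinarith [mul_le_mul_of_nonneg_right hSD (by positivity : (0 : ℝ) ≤ (1 + 2 * δ) * D)]
  exact le_of_mul_le_mul_right this hD

theorem IsCluster.degree_bounds (hδ0 : 0 ≤ δ) (hδ : δ ≤ 1 / 100) (hC : IsCluster G δ C)
    (hC1 : 1 < #C) (hu : u ∈ C) :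
    (1 - 10 * δ) * #C ≤ G.degree u ∧ (G.degree u : ℝ) ≤ (1 + 10 * δ) * #C := by
  obtain ⟨h, hh, hH, hhu⟩ := hC.exists_heavy_nbhdClose hδ0 hC1 hu
  have hcard := hC.degree_lt_card hh hH
  have hcount := hC.card_le_degree hδ0 hδ hh hH
  have hup := hhu.degree_le hδ0 (by linarith)
  have hlow : (G.degree h : ℝ) ≤ G.degree u + δ * (1 + 2 * δ) * G.degree h := by
    have htri : (G.degree h : ℝ) ≤ G.degree u + nbhdDist G u h := by
      exact_mod_cast degree_le_degree_add_nbhdDist u h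
    rw [nbhdDist_comm] at htri
    linarith [hhu.nbhdDist_le hδ0 (by linarith)]
  have hD : (0 : ℝ) ≤ G.degree h := Nat.cast_nonneg _
  constructor
  · refine le_of_mul_le_mul_left ?_ (by linarith : (0 : ℝ) < 1 - 13 / 2 * δ)
    nlinarith [mul_le_mul_of_nonneg_left hcount (by linarith : (0 : ℝ) ≤ 1 - 10 * δ),
      mul_nonneg (mul_nonneg hδ0 hδ0) hD, mul_nonneg (mul_nonneg (mul_nonneg hδ0 hδ0) hδ0) hD]
  · nlinarith [mul_nonneg hδ0 hD, mul_nonneg (mul_nonneg hδ0 hδ0) hD]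

end

/-- For every nontrivial cluster `C` of the agreement decomposition with
parameter `ε/10^14` and every `u ∈ C`,
`(1 − ε/10^13)·|C| ≤ |N(u)| ≤ (1 + ε/10^13)·|C|`. -/
theorem cluster_degree_close_to_cluster_size :
    ∃ ε₀ : ℝ, 0 < ε₀ ∧
      ∀ (V : Type) (_ : Fintype V) (_ : DecidableEq V)
        (G : SimpleGraph V) (_ : DecidableRel G.Adj) (ε : ℝ), 0 < ε → ε < ε₀ →
        ∀ C : Finset V, IsCluster G (ε / 10 ^ 14) C → 1 < C.card →
          ∀ u ∈ C,
            (1 - ε / 10 ^ 13) * (C.card : ℝ) ≤ ((G.neighborFinset u).card : ℝ) ∧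
            ((G.neighborFinset u).card : ℝ) ≤ (1 + ε / 10 ^ 13) * (C.card : ℝ) := by
  refine ⟨1, one_pos, fun V _ _ G _ ε hε hε₀ C hC hC1 u hu => ?_⟩
  rw [show ε / 10 ^ 13 = 10 * (ε / 10 ^ 14) by ring, card_neighborFinset_eq_degree]
  exact hC.degree_bounds (by positivity) (by linarith) hC1 hu
end
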